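/- Every locally finite group admits a weakly finite presentation; more precisely, if G is locally finite then any presentation ⟨A ∥ R⟩ of G with R the full kernel of F(A) → G is weakly finite. -/

import Mathlib

/-! The words of `S` involve only finitely many letters `A₀`. The composite
`F(A₀) → F(A) → G` has finitely generated, hence finite, image, so its kernel has finite index
in the finitely generated group `F(A₀)` and is finitely generated by Schreier's lemma. A finite
generating set `R₀` of this kernel consists of relators of `ker π`, and `⟨A₀ ∥ R₀⟩`, being
`F(A₀)` modulo that kernel, embeds into `F(A) ⧸ ker π` as a whole. -/

open Subgroup

/-- The natural quotient map `F(A) → ⟨A ∥ R⟩` of a presentation. -/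
def presMk {α : Type} (R : Set (FreeGroup α)) :
    FreeGroup α →* FreeGroup α ⧸ Subgroup.normalClosure R :=
  QuotientGroup.mk' (Subgroup.normalClosure R)

/-- A presentation `⟨A ∥ R⟩` is weakly finite if for every finite set `S` of words in
`A^{±1}` there are a finite subalphabet `A₀ ⊆ A` and a finite set `R₀` of relators from `R`
written in `A₀^{±1}`, such that every word of `S` is an `A₀`-word and the natural
homomorphism `⟨A₀ ∥ R₀⟩ → ⟨A ∥ R⟩` restricts to an isomorphism (i.e. is injective) on the
subgroup generated by the images of the words of `S`. -/
def IsWeaklyFinite {α : Type} (R : Set (FreeGroup α)) : Prop :=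
  ∀ S : Finset (FreeGroup α),
    ∃ (A₀ : Finset α) (R₀ S₀ : Finset (FreeGroup {a : α // a ∈ A₀})),
      (FreeGroup.map (Subtype.val) '' (R₀ : Set (FreeGroup {a : α // a ∈ A₀})) ⊆ R) ∧
      (FreeGroup.map (Subtype.val) '' (S₀ : Set (FreeGroup {a : α // a ∈ A₀}))
         = (S : Set (FreeGroup α))) ∧
      ∃ h : (FreeGroup {a : α // a ∈ A₀} ⧸
              Subgroup.normalClosure (R₀ : Set (FreeGroup {a : α // a ∈ A₀}))) →*
            (FreeGroup α ⧸ Subgroup.normalClosure R),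
        (∀ w : FreeGroup {a : α // a ∈ A₀},
           h (presMk (R₀ : Set (FreeGroup {a : α // a ∈ A₀})) w)
             = presMk R (FreeGroup.map Subtype.val w)) ∧
        Set.InjOn h
          (closure (presMk (R₀ : Set (FreeGroup {a : α // a ∈ A₀})) ''
            (S₀ : Set (FreeGroup {a : α // a ∈ A₀}))) : Set _)


/-- A group is locally finite if every finitely generated subgroup is finite. -/
def LocallyFiniteGroup (G : Type) [Group G] : Prop :=
  ∀ H : Subgroup G, H.FG → Finite H

namespace FreeGroup

variable {α : Type*}

theorem range_map_subtype_val (A : Finset α) :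
    (map (Subtype.val : A → α)).range = closure (of '' (A : Set α)) := by
  rw [range_map, Subtype.range_coe]

theorem exists_finset_mem_closure_image_of (x : FreeGroup α) :
    ∃ A : Finset α, x ∈ closure (of '' (A : Set α)) := by
  classical
  induction x using FreeGroup.induction_on with
  | C1 => exact ⟨∅, one_mem _⟩
  | of a => exact ⟨{a}, subset_closure ⟨a, Finset.mem_singleton_self a, rfl⟩⟩
  | inv_of _ hx => exact hx.imp fun _ => inv_mem
  | mul _ _ hx hy =>
    obtain ⟨A, hA⟩ := hx
    obtain ⟨B, hB⟩ := hy
    exact ⟨A ∪ B, mul_mem (closure_mono (by gcongr; exact Finset.subset_union_left) hA)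
      (closure_mono (by gcongr; exact Finset.subset_union_right) hB)⟩

theorem exists_finset_subset_range_map_subtype_val (S : Finset (FreeGroup α)) :
    ∃ A : Finset α, (S : Set (FreeGroup α)) ⊆ (map (Subtype.val : A → α)).range := by
  classical
  choose A hA using exists_finset_mem_closure_image_of (α := α)
  refine ⟨S.biUnion A, fun x hx => ?_⟩
  rw [range_map_subtype_val]
  exact closure_mono (by gcongr; exact Finset.subset_biUnion_of_mem A hx) (hA x)

end FreeGroup

theorem Finset.exists_image_eq_of_subset_range {β γ : Type*} {f : β → γ}
    {S : Finset γ} (hS : (S : Set γ) ⊆ Set.range f) :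
    ∃ S₀ : Finset β, f '' (S₀ : Set β) = S := by
  classical
  rw [← Set.image_univ, Finset.subset_set_image_iff] at hS
  obtain ⟨S₀, -, rfl⟩ := hS
  exact ⟨S₀, Finset.coe_image.symm⟩

theorem QuotientGroup.map_injective_of_eq_comap {G H : Type*} [Group G] [Group H]
    {N : Subgroup G} [N.Normal] {M : Subgroup H} [M.Normal] (f : G →* H) (h : N = M.comap f) :
    Function.Injective (QuotientGroup.map N M f h.le) := by
  rw [injective_iff_map_eq_one]
  intro x hx
  induction x using QuotientGroup.induction_on with
  | H g =>
    rw [QuotientGroup.map_mk, QuotientGroup.eq_one_iff] at hx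
    rw [QuotientGroup.eq_one_iff, h]
    exact hx

namespace LocallyFiniteGroup

variable {G H : Type} [Group G] [Group H]

theorem finite_range (hG : LocallyFiniteGroup G) [Group.FG H] (φ : H →* G) : Finite φ.range :=
  hG _ ((Group.fg_iff_subgroup_fg _).1 (Group.fg_range φ))

theorem isFinitelyNormallyGenerated_ker (hG : LocallyFiniteGroup G) [Group.FG H] (φ : H →* G) :
    φ.ker.IsFinitelyNormallyGenerated :=
  have := hG.finite_range φ
  .of_FG _

end LocallyFiniteGroup

theorem weaklyFinite_of_locallyFinite_general {α : Type} (G : Type) [Group G]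
    (π : FreeGroup α →* G)
    (hG : LocallyFiniteGroup G) :
    IsWeaklyFinite (π.ker : Set (FreeGroup α)) := by
  intro S
  obtain ⟨A₀, hS⟩ := FreeGroup.exists_finset_subset_range_map_subtype_val S
  set ι : FreeGroup A₀ →* FreeGroup α := FreeGroup.map Subtype.val
  obtain ⟨S₀, hS₀⟩ := Finset.exists_image_eq_of_subset_range hS
  obtain ⟨R₀, hR₀, hR₀ker⟩ := hG.isFinitelyNormallyGenerated_ker (π.comp ι)
  lift R₀ to Finset (FreeGroup A₀) using hR₀
  have hker : normalClosure (R₀ : Set (FreeGroup A₀)) =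
      (normalClosure (π.ker : Set (FreeGroup α))).comap ι := by
    rw [hR₀ker, normalClosure_eq_self, MonoidHom.comap_ker]
  refine ⟨A₀, R₀, S₀, ?_, hS₀, QuotientGroup.map _ _ ι hker.le, fun _ => rfl,
    (QuotientGroup.map_injective_of_eq_comap ι hker).injOn⟩
  rintro _ ⟨r, hr, rfl⟩
  exact (hR₀ker ▸ subset_normalClosure hr : r ∈ (π.comp ι).ker)

/-- If `G` is a locally finite group and `π : F(A) → G` is a surjection, then the
presentation of `G` with generators `A` and relators the full kernel of `π` is weakly
finite. -/
theorem weaklyFinite_of_locallyFinite {α : Type} (G : Type) [Group G]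
    (π : FreeGroup α →* G) (hπ : Function.Surjective π)
    (hG : LocallyFiniteGroup G) :
    IsWeaklyFinite (π.ker : Set (FreeGroup α)) :=
  weaklyFinite_of_locallyFinite_general G π hG
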